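/- arXiv:2605.25342 — 5 statements merged into one kernel-verified Lean document; each statement's English description precedes it below -/
import Mathlib

section
/- Let Y be a finite nonempty type, let π_base be a full-support probability vector on Y, let r : Y → ℝ, and let β > 0. Then the supremum over all probability vectors π on Y of ∑_y π(y)·r(y) − β·KL(π‖π_base) equals β·log(∑_y π_base(y)·exp(r(y)/β)), and this supremum is attained. -/
/-!
Let `Z = ∑ y, πb y * exp (r y / β)` and let `π⋆ = tilt πb (r / β)` be the Gibbs vector
`πb * exp (r / β) / Z`. For every probability vector `ρ` the objective equals
`β * log Z - β * KL ρ π⋆`, so by Gibbs' inequality it is at most `β * log Z`, with equality at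
`ρ = π⋆`.
-/

open Finset Real

/-- Kullback–Leibler divergence between finitely supported probability vectors.
Terms with `p y = 0` vanish since `0 * log _ = 0`. -/
noncomputable def KL {Y : Type*} [Fintype Y] (p q : Y → ℝ) : ℝ :=
  ∑ y, p y * Real.log (p y / q y)

lemma sub_le_mul_log_div {p q : ℝ} (hp : 0 ≤ p) (hq : 0 < q) : p - q ≤ p * log (p / q) := by
  have h := mul_le_mul_of_nonneg_left (self_sub_one_le_mul_log (div_nonneg hp hq.le)) hq.le
  rwa [mul_sub, mul_one, ← mul_assoc, mul_div_cancel₀ _ hq.ne'] at h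

section KL

variable {Y : Type*} [Fintype Y]

@[simp]
lemma KL_self (p : Y → ℝ) : KL p p = 0 := by
  refine Finset.sum_eq_zero fun y _ => ?_
  by_cases hy : p y = 0 <;> simp [hy]

lemma KL_nonneg {p q : Y → ℝ} (hp : ∀ y, 0 ≤ p y) (hq : ∀ y, 0 < q y)
    (hmass : ∑ y, q y ≤ ∑ y, p y) : 0 ≤ KL p q := by
  have h := Finset.sum_le_sum fun y (_ : y ∈ univ) => sub_le_mul_log_div (hp y) (hq y)
  rw [Finset.sum_sub_distrib] at h
  exact (sub_nonneg.mpr hmass).trans h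

noncomputable def tilt (q f : Y → ℝ) : Y → ℝ :=
  fun y => q y * exp (f y) / ∑ z, q z * exp (f z)

variable [Nonempty Y] {q : Y → ℝ}

lemma sum_mul_exp_pos (hq : ∀ y, 0 < q y) (f : Y → ℝ) : 0 < ∑ y, q y * exp (f y) :=
  Finset.sum_pos (fun y _ => mul_pos (hq y) (exp_pos _)) univ_nonempty

lemma tilt_pos (hq : ∀ y, 0 < q y) (f : Y → ℝ) (y : Y) : 0 < tilt q f y :=
  div_pos (mul_pos (hq y) (exp_pos _)) (sum_mul_exp_pos hq f)

lemma sum_tilt (hq : ∀ y, 0 < q y) (f : Y → ℝ) : ∑ y, tilt q f y = 1 := by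
  unfold tilt
  rw [← Finset.sum_div, div_self (sum_mul_exp_pos hq f).ne']

lemma KL_tilt (hq : ∀ y, 0 < q y) (f : Y → ℝ) {p : Y → ℝ} (hp : ∑ y, p y = 1) :
    KL p (tilt q f) = KL p q - ∑ y, p y * f y + log (∑ y, q y * exp (f y)) := by
  have hZ := (sum_mul_exp_pos hq f).ne'
  have hterm : ∀ y, p y * log (p y / tilt q f y)
      = p y * log (p y / q y) - p y * f y + p y * log (∑ y, q y * exp (f y)) := by
    intro y
    by_cases hy : p y = 0
    · simp [hy]
    have hqy := (hq y).ne'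
    unfold tilt
    rw [log_div hy (div_ne_zero (mul_ne_zero hqy (exp_ne_zero _)) hZ), log_div hy hqy,
      log_div (mul_ne_zero hqy (exp_ne_zero _)) hZ, log_mul hqy (exp_ne_zero _), log_exp]
    ring
  rw [KL, KL, Finset.sum_congr rfl fun y _ => hterm y, Finset.sum_add_distrib,
    Finset.sum_sub_distrib, ← Finset.sum_mul, hp, one_mul]

end KL

theorem sup_is_log_partition_general
    {Y : Type*} [Fintype Y] [Nonempty Y]
    (πb : Y → ℝ) (hπb_pos : ∀ y, 0 < πb y)
    (r : Y → ℝ) (β : ℝ) (hβ : 0 < β) :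
    IsGreatest
      ((fun ρ : Y → ℝ => (∑ y, ρ y * r y) - β * KL ρ πb) ''
        {ρ : Y → ℝ | (∀ y, 0 ≤ ρ y) ∧ ∑ y, ρ y = 1})
      (β * Real.log (∑ y, πb y * Real.exp (r y / β))) := by
  have hobjective : ∀ ρ : Y → ℝ, ∑ y, ρ y = 1 → (∑ y, ρ y * r y) - β * KL ρ πb
      = β * log (∑ y, πb y * exp (r y / β)) - β * KL ρ (tilt πb fun y => r y / β) := by
    intro ρ hρ
    have hscale : ∑ y, ρ y * (r y / β) = (∑ y, ρ y * r y) / β := by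
      simp only [Finset.sum_div, mul_div_assoc]
    rw [KL_tilt hπb_pos _ hρ, hscale]
    field_simp
    ring
  have htilt_sum : ∑ y, tilt πb (fun y => r y / β) y = 1 := sum_tilt hπb_pos _
  refine ⟨⟨tilt πb fun y => r y / β, ⟨fun y => (tilt_pos hπb_pos _ y).le, htilt_sum⟩, ?_⟩, ?_⟩
  · simp only [hobjective _ htilt_sum, KL_self, mul_zero, sub_zero]
  · rintro _ ⟨ρ, ⟨hρ_nonneg, hρ_sum⟩, rfl⟩
    have hgibbs := KL_nonneg hρ_nonneg (tilt_pos hπb_pos _) (by rw [hρ_sum, htilt_sum])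
    simp only [hobjective ρ hρ_sum]
    linarith [mul_nonneg hβ.le hgibbs]

/-- The supremum of the KL-regularized objective over probability vectors equals
`β * log (∑ y, π_base y * exp (r y / β))`, and it is attained. -/
theorem sup_is_log_partition
    {Y : Type*} [Fintype Y] [Nonempty Y]
    (πb : Y → ℝ) (hπb_pos : ∀ y, 0 < πb y) (hπb_sum : ∑ y, πb y = 1)
    (r : Y → ℝ) (β : ℝ) (hβ : 0 < β) :
    IsGreatest
      ((fun ρ : Y → ℝ => (∑ y, ρ y * r y) - β * KL ρ πb) ''
        {ρ : Y → ℝ | (∀ y, 0 ≤ ρ y) ∧ ∑ y, ρ y = 1})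
      (β * Real.log (∑ y, πb y * Real.exp (r y / β))) :=
  sup_is_log_partition_general πb hπb_pos r β hβ
end

section
/- Let K ≥ 1, let W^init be a full-support probability vector on Fin K, let R : Fin K → ℝ, and let τ > 0. If a probability vector W on Fin K minimizes F(W) = ∑_k w_k·R_k + τ·KL(W‖W^init) over all probability vectors on Fin K, then W has full support, i.e., w_k > 0 for every k. -/
open Finset Real

/-- Sum of a function differing from another only at two points. -/
lemma sum_diff_two {K : ℕ} (k0 k1 : Fin K) (h : k0 ≠ k1) (f g : Fin K → ℝ)
    (hfg : ∀ k, k ≠ k0 → k ≠ k1 → f k = g k) :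
    ∑ k, f k = ∑ k, g k + (f k0 - g k0) + (f k1 - g k1) := by
  have h1 : ∑ k, (f k - g k) = ∑ k ∈ ({k0, k1} : Finset (Fin K)), (f k - g k) := by
    refine (Finset.sum_subset (Finset.subset_univ _) ?_).symm
    intro x _ hx
    simp only [Finset.mem_insert, Finset.mem_singleton, not_or] at hx
    rw [hfg x hx.1 hx.2]; ring
  rw [Finset.sum_pair h] at h1
  have h2 : ∑ k, (f k - g k) = ∑ k, f k - ∑ k, g k := Finset.sum_sub_distrib _ _
  rw [h2] at h1
  linarith

/-- Any minimizer of `F(W) = ∑ k, W k * R k + τ * KL(W ‖ W_init)` over probability vectors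
on `Fin K` has full support. -/
theorem minimizer_full_support
    (K : ℕ) (hK : 1 ≤ K)
    (Winit : Fin K → ℝ) (hWinit_pos : ∀ k, 0 < Winit k) (hWinit_sum : ∑ k, Winit k = 1)
    (R : Fin K → ℝ) (τ : ℝ) (hτ : 0 < τ)
    (W : Fin K → ℝ) (hW_nonneg : ∀ k, 0 ≤ W k) (hW_sum : ∑ k, W k = 1)
    (hmin : ∀ W' : Fin K → ℝ, (∀ k, 0 ≤ W' k) → ∑ k, W' k = 1 →
      (∑ k, W k * R k) + τ * KL W Winit ≤ (∑ k, W' k * R k) + τ * KL W' Winit) :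
    ∀ k, 0 < W k := by
  intro k0
  by_contra hk0
  push_neg at hk0
  have hW0 : W k0 = 0 := le_antisymm hk0 (hW_nonneg k0)
  -- find k1 with W k1 > 0
  obtain ⟨k1, hk1⟩ : ∃ k1, 0 < W k1 := by
    by_contra hall
    push_neg at hall
    have : ∑ k, W k = 0 := by
      apply Finset.sum_eq_zero
      intro k _
      exact le_antisymm (hall k) (hW_nonneg k)
    rw [hW_sum] at this; norm_num at this
  have hne : k0 ≠ k1 := by
    intro h; rw [h] at hW0; rw [hW0] at hk1; exact lt_irrefl 0 hk1
  set w1 := W k1 with hw1def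
  set q0 := Winit k0 with hq0def
  set q1 := Winit k1 with hq1def
  have hq0 : 0 < q0 := hWinit_pos k0
  have hq1 : 0 < q1 := hWinit_pos k1
  -- the perturbation gain function
  set g : ℝ → ℝ := fun ε =>
    ε * (R k0 - R k1) + τ * (ε * Real.log (ε / q0)
      + (w1 - ε) * Real.log ((w1 - ε) / q1) - w1 * Real.log (w1 / q1)) with hgdef
  -- minimality gives 0 ≤ g ε for ε ∈ (0, w1)
  have hge : ∀ ε, 0 < ε → ε < w1 → 0 ≤ g ε := by
    intro ε hε1 hε2
    set W' : Fin K → ℝ := fun k => if k = k0 then ε else if k = k1 then w1 - ε else W k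
      with hW'def
    have hW'k0 : W' k0 = ε := by simp [hW'def]
    have hW'k1 : W' k1 = w1 - ε := by simp [hW'def, hne.symm]
    have hW'other : ∀ k, k ≠ k0 → k ≠ k1 → W' k = W k := by
      intro k h1 h2; simp [hW'def, h1, h2]
    have hW'nonneg : ∀ k, 0 ≤ W' k := by
      intro k
      by_cases h1 : k = k0
      · rw [h1, hW'k0]; linarith
      by_cases h2 : k = k1
      · rw [h2, hW'k1]; linarith
      · rw [hW'other k h1 h2]; exact hW_nonneg k
    have hW'sum : ∑ k, W' k = 1 := by
      have := sum_diff_two k0 k1 hne W' W hW'other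
      rw [this, hW_sum, hW'k0, hW'k1, hW0]; ring
    have hR : ∑ k, W' k * R k
        = ∑ k, W k * R k + ε * R k0 + ((w1 - ε) * R k1 - w1 * R k1) := by
      have := sum_diff_two k0 k1 hne (fun k => W' k * R k) (fun k => W k * R k)
        (fun k h1 h2 => by rw [hW'other k h1 h2])
      rw [hW'k0, hW'k1, hW0] at this
      rw [this]; ring
    have hKL : KL W' Winit = KL W Winit + ε * Real.log (ε / q0)
        + ((w1 - ε) * Real.log ((w1 - ε) / q1) - w1 * Real.log (w1 / q1)) := by
      have := sum_diff_two k0 k1 hne (fun k => W' k * Real.log (W' k / Winit k))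
        (fun k => W k * Real.log (W k / Winit k))
        (fun k h1 h2 => by rw [hW'other k h1 h2])
      rw [hW'k0, hW'k1, hW0] at this
      unfold KL
      rw [this]; ring
    have := hmin W' hW'nonneg hW'sum
    rw [hR, hKL] at this
    rw [hgdef]
    dsimp only
    nlinarith [this]
  -- g ε / ε tends to -∞ as ε → 0⁺, so g ε < 0 for some small ε: contradiction
  set h : ℝ → ℝ := fun ε => (w1 - ε) * Real.log ((w1 - ε) / q1) with hhdef
  have hderiv : ∃ c, HasDerivAt h c 0 := by
    have h1 : HasDerivAt (fun ε : ℝ => w1 - ε) (-1) 0 := by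
      simpa using (hasDerivAt_id (0:ℝ)).const_sub w1
    have h2 : HasDerivAt (fun ε : ℝ => (w1 - ε) / q1) (-1 / q1) 0 := h1.div_const q1
    have h3 : ((w1 - 0) / q1) ≠ 0 := by
      simp only [sub_zero]
      positivity
    have h4 : HasDerivAt (fun ε : ℝ => Real.log ((w1 - ε) / q1))
        ((-1 / q1) / ((w1 - 0) / q1)) 0 := h2.log h3
    exact ⟨_, h1.mul h4⟩
  obtain ⟨c, hc⟩ := hderiv
  have hslope : Filter.Tendsto (fun ε => (h ε - h 0) / ε) (nhdsWithin 0 (Set.Ioi 0))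
      (nhds c) := by
    have := hasDerivAt_iff_tendsto_slope.mp hc
    have hmono : nhdsWithin (0:ℝ) (Set.Ioi 0) ≤ nhdsWithin 0 {(0:ℝ)}ᶜ :=
      nhdsWithin_mono _ (fun x hx => ne_of_gt hx)
    refine (this.mono_left hmono).congr ?_
    intro ε
    simp [slope_def_field, div_eq_inv_mul]
  have hlog : Filter.Tendsto (fun ε : ℝ => τ * Real.log ε) (nhdsWithin 0 (Set.Ioi 0))
      Filter.atBot :=
    Filter.tendsto_const_mul_atBot_of_pos hτ |>.mpr Real.tendsto_log_nhdsGT_zero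
  have hrest : Filter.Tendsto
      (fun ε => (R k0 - R k1) - τ * Real.log q0 + τ * ((h ε - h 0) / ε))
      (nhdsWithin 0 (Set.Ioi 0)) (nhds ((R k0 - R k1) - τ * Real.log q0 + τ * c)) := by
    exact (tendsto_const_nhds.add ((hslope.const_mul τ)))
  have htot : Filter.Tendsto
      (fun ε => ((R k0 - R k1) - τ * Real.log q0 + τ * ((h ε - h 0) / ε)) + τ * Real.log ε)
      (nhdsWithin 0 (Set.Ioi 0)) Filter.atBot := hrest.add_atBot hlog
  have hev1 : ∀ᶠ ε in nhdsWithin (0:ℝ) (Set.Ioi 0),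
      ((R k0 - R k1) - τ * Real.log q0 + τ * ((h ε - h 0) / ε)) + τ * Real.log ε < 0 :=
    htot.eventually (Filter.eventually_lt_atBot 0)
  have hev2 : ∀ᶠ ε in nhdsWithin (0:ℝ) (Set.Ioi 0), ε ∈ Set.Ioo 0 w1 := by
    have : Set.Ioo (0:ℝ) w1 ∈ nhdsWithin (0:ℝ) (Set.Ioi 0) :=
      Ioo_mem_nhdsGT_of_mem (by constructor <;> simp [hk1])
    exact Filter.eventually_of_mem this (fun x hx => hx)
  obtain ⟨ε, hεlt, hεI⟩ := (hev1.and hev2).exists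
  have hε0 : 0 < ε := hεI.1
  have hεw : ε < w1 := hεI.2
  -- show g ε / ε equals the expression
  have hkey : g ε / ε
      = ((R k0 - R k1) - τ * Real.log q0 + τ * ((h ε - h 0) / ε)) + τ * Real.log ε := by
    have hεne : ε ≠ 0 := ne_of_gt hε0
    have hlogdiv : Real.log (ε / q0) = Real.log ε - Real.log q0 :=
      Real.log_div hεne (ne_of_gt hq0)
    rw [hgdef, hhdef]
    dsimp only
    rw [hlogdiv]
    field_simp
    ring
  have hgneg : g ε < 0 := by
    have : g ε / ε < 0 := by rw [hkey]; exact hεlt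
    rcases div_neg_iff.mp this with ⟨h1, h2⟩ | ⟨h1, h2⟩
    · linarith
    · exact h1
  exact absurd (hge ε hε0 hεw) (not_le.mpr hgneg)
end

section
/- Let Y be a finite nonempty type, let u : Y → ℝ, let p and q be full-support probability vectors on Y, and let a > 0 and b > 0. Define σ(y) = exp((u(y) + a·log p(y) + b·log q(y))/(a+b)) / ∑_{y'} exp((u(y') + a·log p(y') + b·log q(y'))/(a+b)). Then σ is a full-support probability vector on Y, and σ is the unique maximizer over probability vectors π on Y of the doubly KL-regularized linear objective ∑_y π(y)·u(y) − a·KL(π‖p) − b·KL(π‖q); that is, for every probability vector π the objective at π is at most its value at σ, with equality if and only if π = σ. -/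
open Finset Real InformationTheory

/-! Rewriting `KL(ρ‖p)` and `KL(ρ‖q)` through `∑ ρ log ρ`, the objective becomes `(a + b)`
times `∑ ρ E − ∑ ρ log ρ` with `E = (u + a log p + b log q) / (a + b)`. By the Gibbs
variational identity this equals `log ∑ exp E − KL(ρ‖σ)` for the Gibbs distribution
`σ ∝ exp E`, and `KL(ρ‖σ) = ∑ σ · klFun(ρ / σ)` is nonnegative and vanishes exactly at `ρ = σ`. -/

lemma mul_log_div_sub_eq_mul_klFun {x t : ℝ} (ht : t ≠ 0) :
    x * log (x / t) - (x - t) = t * klFun (x / t) := by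
  rw [klFun_apply]
  field_simp
  ring

lemma mul_log_div_eq_sub {x t : ℝ} (ht : t ≠ 0) : x * log (x / t) = x * log x - x * log t := by
  rcases eq_or_ne x 0 with rfl | hx
  · simp
  · rw [log_div hx ht]
    ring

section KL

variable {Y : Type*} [Fintype Y]

lemma KL_eq_sum_mul_klFun {ρ σ : Y → ℝ} (hσ : ∀ y, σ y ≠ 0)
    (hsum : ∑ y, ρ y = ∑ y, σ y) :
    KL ρ σ = ∑ y, σ y * klFun (ρ y / σ y) := by
  have hmass : ∑ y, (ρ y - σ y) = 0 := by rw [sum_sub_distrib, hsum, sub_self]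
  calc KL ρ σ = ∑ y, (ρ y * log (ρ y / σ y) - (ρ y - σ y)) := by
        rw [sum_sub_distrib, hmass, sub_zero, KL]
    _ = ∑ y, σ y * klFun (ρ y / σ y) :=
        sum_congr rfl fun y _ => mul_log_div_sub_eq_mul_klFun (hσ y)

lemma KL_nonneg_s10 {ρ σ : Y → ℝ} (hρ : ∀ y, 0 ≤ ρ y) (hσ : ∀ y, 0 < σ y)
    (hsum : ∑ y, ρ y = ∑ y, σ y) : 0 ≤ KL ρ σ := by
  rw [KL_eq_sum_mul_klFun (fun y => (hσ y).ne') hsum]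
  exact sum_nonneg fun y _ => mul_nonneg (hσ y).le (klFun_nonneg (div_nonneg (hρ y) (hσ y).le))

lemma KL_eq_zero_iff {ρ σ : Y → ℝ} (hρ : ∀ y, 0 ≤ ρ y) (hσ : ∀ y, 0 < σ y)
    (hsum : ∑ y, ρ y = ∑ y, σ y) : KL ρ σ = 0 ↔ ρ = σ := by
  have hterm : ∀ y, 0 ≤ ρ y / σ y := fun y => div_nonneg (hρ y) (hσ y).le
  rw [KL_eq_sum_mul_klFun (fun y => (hσ y).ne') hsum,
    sum_eq_zero_iff_of_nonneg fun y _ => mul_nonneg (hσ y).le (klFun_nonneg (hterm y)),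
    funext_iff]
  refine forall_congr' fun y => ?_
  rw [mul_eq_zero, or_iff_right (hσ y).ne', klFun_eq_zero_iff (hterm y),
    div_eq_one_iff_eq (hσ y).ne']
  simp

lemma KL_eq_sum_mul_log_sub {ρ q : Y → ℝ} (hq : ∀ y, q y ≠ 0) :
    KL ρ q = ∑ y, ρ y * log (ρ y) - ∑ y, ρ y * log (q y) := by
  rw [KL, ← sum_sub_distrib]
  exact sum_congr rfl fun y _ => mul_log_div_eq_sub (hq y)

end KL

section Gibbs

variable {Y : Type*} [Fintype Y]

noncomputable def gibbs (E : Y → ℝ) (y : Y) : ℝ := exp (E y) / ∑ y', exp (E y')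

noncomputable def entropyRegularizedValue (E ρ : Y → ℝ) : ℝ :=
  ∑ y, ρ y * E y - ∑ y, ρ y * log (ρ y)

variable [Nonempty Y] (E : Y → ℝ)

lemma sum_exp_pos : 0 < ∑ y, exp (E y) := sum_pos (fun _ _ => exp_pos _) univ_nonempty

lemma gibbs_pos (y : Y) : 0 < gibbs E y := div_pos (exp_pos _) (sum_exp_pos E)

lemma sum_gibbs : ∑ y, gibbs E y = 1 := by
  simp only [gibbs]
  rw [← sum_div, div_self (sum_exp_pos E).ne']

lemma log_gibbs (y : Y) : log (gibbs E y) = E y - log (∑ y', exp (E y')) := by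
  rw [gibbs, log_div (exp_ne_zero _) (sum_exp_pos E).ne', log_exp]

lemma entropyRegularizedValue_eq_log_sum_exp_sub_KL {ρ : Y → ℝ} (hρ : ∑ y, ρ y = 1) :
    entropyRegularizedValue E ρ = log (∑ y, exp (E y)) - KL ρ (gibbs E) := by
  rw [KL_eq_sum_mul_log_sub fun y => (gibbs_pos E y).ne', entropyRegularizedValue]
  simp only [log_gibbs, mul_sub, sum_sub_distrib, ← sum_mul, hρ, one_mul]
  ring

theorem entropyRegularizedValue_le_gibbs {ρ : Y → ℝ} (hρ0 : ∀ y, 0 ≤ ρ y)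
    (hρ1 : ∑ y, ρ y = 1) :
    entropyRegularizedValue E ρ ≤ entropyRegularizedValue E (gibbs E) ∧
      (entropyRegularizedValue E ρ = entropyRegularizedValue E (gibbs E) ↔ ρ = gibbs E) := by
  have hsum : ∑ y, ρ y = ∑ y, gibbs E y := by rw [hρ1, sum_gibbs]
  have hself : KL (gibbs E) (gibbs E) = 0 :=
    (KL_eq_zero_iff (fun y => (gibbs_pos E y).le) (gibbs_pos E) rfl).mpr rfl
  rw [entropyRegularizedValue_eq_log_sum_exp_sub_KL E hρ1,
    entropyRegularizedValue_eq_log_sum_exp_sub_KL E (sum_gibbs E), hself, sub_zero,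
    sub_eq_self, KL_eq_zero_iff hρ0 (gibbs_pos E) hsum]
  exact ⟨sub_le_self _ (KL_nonneg_s10 hρ0 (gibbs_pos E) hsum), Iff.rfl⟩

end Gibbs

lemma doubly_regularized_objective_eq {Y : Type*} [Fintype Y] {u p q ρ : Y → ℝ}
    (hp : ∀ y, p y ≠ 0) (hq : ∀ y, q y ≠ 0) {a b : ℝ} (hab : a + b ≠ 0) :
    (∑ y, ρ y * u y) - a * KL ρ p - b * KL ρ q =
      (a + b) * entropyRegularizedValue
        (fun y => (u y + a * log (p y) + b * log (q y)) / (a + b)) ρ := by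
  rw [KL_eq_sum_mul_log_sub hp, KL_eq_sum_mul_log_sub hq, entropyRegularizedValue]
  simp only [mul_sub, mul_sum, ← sum_sub_distrib]
  refine sum_congr rfl fun y _ => ?_
  field_simp
  ring

theorem doubly_regularized_unique_maximizer_general
    {Y : Type*} [Fintype Y] [Nonempty Y]
    (u : Y → ℝ) (p q : Y → ℝ)
    (hp_pos : ∀ y, 0 < p y)
    (hq_pos : ∀ y, 0 < q y)
    (a b : ℝ) (ha : 0 < a) (hb : 0 < b)
    (σ : Y → ℝ)
    (hσ : ∀ y, σ y =
      Real.exp ((u y + a * Real.log (p y) + b * Real.log (q y)) / (a + b)) /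
        ∑ y', Real.exp ((u y' + a * Real.log (p y') + b * Real.log (q y')) / (a + b))) :
    ((∀ y, 0 < σ y) ∧ ∑ y, σ y = 1) ∧
    (∀ ρ : Y → ℝ, (∀ y, 0 ≤ ρ y) → ∑ y, ρ y = 1 →
      (((∑ y, ρ y * u y) - a * KL ρ p - b * KL ρ q ≤
          (∑ y, σ y * u y) - a * KL σ p - b * KL σ q) ∧
       (((∑ y, ρ y * u y) - a * KL ρ p - b * KL ρ q =
          (∑ y, σ y * u y) - a * KL σ p - b * KL σ q) ↔ ρ = σ))) := by
  set E : Y → ℝ := fun y => (u y + a * log (p y) + b * log (q y)) / (a + b)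
  have hσE : σ = gibbs E := funext hσ
  have hab : 0 < a + b := add_pos ha hb
  have hobj : ∀ ρ : Y → ℝ, (∑ y, ρ y * u y) - a * KL ρ p - b * KL ρ q =
      (a + b) * entropyRegularizedValue E ρ := fun ρ =>
    doubly_regularized_objective_eq (fun y => (hp_pos y).ne') (fun y => (hq_pos y).ne') hab.ne'
  subst hσE
  refine ⟨⟨gibbs_pos E, sum_gibbs E⟩, fun ρ hρ0 hρ1 => ?_⟩
  obtain ⟨hle, heq⟩ := entropyRegularizedValue_le_gibbs E hρ0 hρ1
  rw [hobj, hobj, mul_right_inj' hab.ne', heq]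
  exact ⟨mul_le_mul_of_nonneg_left hle hab.le, Iff.rfl⟩

/-- The softmax-type distribution `σ` is a full-support probability vector and is the unique
maximizer of the doubly KL-regularized linear objective
`π ↦ ∑ y, ρ y * u y − a * KL(π ‖ p) − b * KL(π ‖ q)`. -/
theorem doubly_regularized_unique_maximizer
    {Y : Type*} [Fintype Y] [Nonempty Y]
    (u : Y → ℝ) (p q : Y → ℝ)
    (hp_pos : ∀ y, 0 < p y) (hp_sum : ∑ y, p y = 1)
    (hq_pos : ∀ y, 0 < q y) (hq_sum : ∑ y, q y = 1)
    (a b : ℝ) (ha : 0 < a) (hb : 0 < b)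
    (σ : Y → ℝ)
    (hσ : ∀ y, σ y =
      Real.exp ((u y + a * Real.log (p y) + b * Real.log (q y)) / (a + b)) /
        ∑ y', Real.exp ((u y' + a * Real.log (p y') + b * Real.log (q y')) / (a + b))) :
    ((∀ y, 0 < σ y) ∧ ∑ y, σ y = 1) ∧
    (∀ ρ : Y → ℝ, (∀ y, 0 ≤ ρ y) → ∑ y, ρ y = 1 →
      (((∑ y, ρ y * u y) - a * KL ρ p - b * KL ρ q ≤
          (∑ y, σ y * u y) - a * KL σ p - b * KL σ q) ∧
       (((∑ y, ρ y * u y) - a * KL ρ p - b * KL ρ q =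
          (∑ y, σ y * u y) - a * KL σ p - b * KL σ q) ↔ ρ = σ))) :=
  doubly_regularized_unique_maximizer_general u p q hp_pos hq_pos a b ha hb σ hσ
end

section
/- Let V be a finite nonempty type and n ≥ 1, let q be a full-support probability vector on the function type Fin n → V, let R : (Fin n → V) → ℝ, and let β > 0. Set Z = ∑_z q(z)·exp(R(z)/β) and p(z) = q(z)·exp(R(z)/β)/Z. For a probability vector μ on Fin n → V and 0 ≤ i ≤ n, define the prefix marginal μ_i(y) = ∑_{z : z agrees with y on all coordinates j with j < i} μ(z) (so μ_0(y) = 1), and for 1 ≤ i ≤ n define the i-th conditional c_i^μ(y) = μ_i(y)/μ_{i−1}(y). Then the sequence-level reward decomposes into a sum of token-level log-ratio rewards: for every y : Fin n → V, R(y) = β·∑_{i=1}^{n} log( c_i^p(y) / c_i^q(y) ) + β·log Z. -/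
/-!
Since each conditional is a ratio of consecutive prefix marginals, the token-level
log-ratios `log (c_i^p / c_i^q)` telescope: their sum is `log (p_n(y) / q_n(y)) - log (p_0(y) / q_0(y))`.
The full-length marginals are `p y` and `q y`, and the empty-prefix marginals are the total
masses, both equal to `1`. So the sum is `log (p y / q y) = R y / β - log Z`.
-/

open Finset Real

theorem sum_range_log_div_div_div {a b : ℕ → ℝ} (ha : ∀ i, 0 < a i) (hb : ∀ i, 0 < b i)
    (n : ℕ) :
    ∑ i ∈ range n, log ((a (i + 1) / a i) / (b (i + 1) / b i)) =
      log (a n / b n) - log (a 0 / b 0) := by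
  have hstep : ∀ i, log ((a (i + 1) / a i) / (b (i + 1) / b i)) =
      log (a (i + 1) / b (i + 1)) - log (a i / b i) := by
    intro i
    have ha_ne := (ha i).ne'
    have hb_ne := (hb i).ne'
    rw [← log_div (div_pos (ha _) (hb _)).ne' (div_pos (ha _) (hb _)).ne']
    congr 1
    field_simp
  simp only [hstep]
  exact sum_range_sub (fun i => log (a i / b i)) n

section PrefixMarginal

variable {V : Type*} [Fintype V] [DecidableEq V] {n : ℕ}

def prefixMarginal {M : Type*} [AddCommMonoid M] (μ : (Fin n → V) → M) (i : ℕ)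
    (y : Fin n → V) : M :=
  ∑ z ∈ univ.filter (fun z : Fin n → V => ∀ j : Fin n, (j : ℕ) < i → z j = y j), μ z

theorem prefixMarginal_zero {M : Type*} [AddCommMonoid M] (μ : (Fin n → V) → M)
    (y : Fin n → V) : prefixMarginal μ 0 y = ∑ z, μ z := by
  simp [prefixMarginal]

theorem prefixMarginal_length {M : Type*} [AddCommMonoid M] (μ : (Fin n → V) → M)
    (y : Fin n → V) : prefixMarginal μ n y = μ y := by
  have hfull : univ.filter (fun z : Fin n → V => ∀ j : Fin n, (j : ℕ) < n → z j = y j) = {y} := by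
    ext z
    simp only [mem_filter, mem_univ, true_and, mem_singleton]
    exact ⟨fun h => funext fun j => h j j.isLt, fun h j _ => h ▸ rfl⟩
  rw [prefixMarginal, hfull, sum_singleton]

theorem prefixMarginal_pos {μ : (Fin n → V) → ℝ} (hμ : ∀ z, 0 < μ z) (i : ℕ)
    (y : Fin n → V) : 0 < prefixMarginal μ i y :=
  sum_pos (fun z _ => hμ z) ⟨y, by simp⟩

end PrefixMarginal

theorem token_level_reward_decomposition_general
    {V : Type*} [Fintype V] [DecidableEq V]
    (n : ℕ)
    (q : (Fin n → V) → ℝ) (hq_pos : ∀ z, 0 < q z) (hq_sum : ∑ z, q z = 1)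
    (R : (Fin n → V) → ℝ) (β : ℝ) (hβ : 0 < β)
    (Z : ℝ) (hZ : Z = ∑ z, q z * Real.exp (R z / β))
    (p : (Fin n → V) → ℝ) (hp : ∀ z, p z = q z * Real.exp (R z / β) / Z)
    (marg : ((Fin n → V) → ℝ) → ℕ → (Fin n → V) → ℝ)
    (hmarg : ∀ μ i y, marg μ i y =
      ∑ z ∈ Finset.univ.filter (fun z : Fin n → V => ∀ j : Fin n, (j : ℕ) < i → z j = y j), μ z) :
    ∀ y : Fin n → V,
      R y = β * ∑ i ∈ Finset.range n,
          Real.log ((marg p (i + 1) y / marg p i y) / (marg q (i + 1) y / marg q i y)) +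
        β * Real.log Z := by
  intro y
  obtain rfl : marg = prefixMarginal := funext fun μ => funext fun i => funext (hmarg μ i)
  have hZ_pos : 0 < Z := hZ ▸ sum_pos (fun z _ => mul_pos (hq_pos z) (exp_pos _)) ⟨y, mem_univ y⟩
  have hp_pos : ∀ z, 0 < p z := fun z => hp z ▸ div_pos (mul_pos (hq_pos z) (exp_pos _)) hZ_pos
  have hp_sum : ∑ z, p z = 1 := by
    simp only [hp]
    rw [← sum_div, ← hZ, div_self hZ_pos.ne']
  have hlog_ratio : log (p y / q y) = R y / β - log Z := by
    have hq := (hq_pos y).ne'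
    rw [show p y / q y = exp (R y / β) / Z by rw [hp]; field_simp,
      log_div (exp_pos _).ne' hZ_pos.ne', log_exp]
  rw [sum_range_log_div_div_div (fun i => prefixMarginal_pos hp_pos i y)
      (fun i => prefixMarginal_pos hq_pos i y), prefixMarginal_length, prefixMarginal_length,
    prefixMarginal_zero, prefixMarginal_zero, hp_sum, hq_sum, div_one, log_one, sub_zero,
    hlog_ratio]
  field_simp
  ring

/-- The sequence-level reward of an exponentially tilted sequence distribution decomposes
into a sum of token-level log-ratio rewards plus `β * log Z`. -/
theorem token_level_reward_decomposition
    {V : Type*} [Fintype V] [Nonempty V] [DecidableEq V]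
    (n : ℕ) (hn : 1 ≤ n)
    (q : (Fin n → V) → ℝ) (hq_pos : ∀ z, 0 < q z) (hq_sum : ∑ z, q z = 1)
    (R : (Fin n → V) → ℝ) (β : ℝ) (hβ : 0 < β)
    (Z : ℝ) (hZ : Z = ∑ z, q z * Real.exp (R z / β))
    (p : (Fin n → V) → ℝ) (hp : ∀ z, p z = q z * Real.exp (R z / β) / Z)
    (marg : ((Fin n → V) → ℝ) → ℕ → (Fin n → V) → ℝ)
    (hmarg : ∀ μ i y, marg μ i y =
      ∑ z ∈ Finset.univ.filter (fun z : Fin n → V => ∀ j : Fin n, (j : ℕ) < i → z j = y j), μ z) :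
    ∀ y : Fin n → V,
      R y = β * ∑ i ∈ Finset.range n,
          Real.log ((marg p (i + 1) y / marg p i y) / (marg q (i + 1) y / marg q i y)) +
        β * Real.log Z :=
  token_level_reward_decomposition_general n q hq_pos hq_sum R β hβ Z hZ p hp marg hmarg
end

section
/- Let Y be a finite nonempty type, let π_base be a full-support probability vector on Y, let K ≥ 1, let R : Fin K → Y → ℝ, let β > 0, and let w be a probability vector on Fin K. For each k define the single-objective tilted distribution π_k(y) = π_base(y)·exp(R_k(y)/β)/Z_k with Z_k = ∑_{y'} π_base(y')·exp(R_k(y')/β), and define the multi-objective tilted distribution π_W(y) = π_base(y)·exp((∑_k w_k·R_k(y))/β)/Z_W with Z_W = ∑_{y'} π_base(y')·exp((∑_k w_k·R_k(y'))/β). Then π_W is the normalized base-corrected weighted geometric mean of the single-objective distributions: for every y, π_W(y) = π_base(y)·∏_k (π_k(y)/π_base(y))^{w_k} / Z', where Z' = ∑_{y'} π_base(y')·∏_k (π_k(y')/π_base(y'))^{w_k}. -/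
open Finset Real

/-- The multi-objective tilted distribution equals the normalized base-corrected weighted
geometric mean of the single-objective tilted distributions. -/
theorem tilted_geometric_mean
    {Y : Type*} [Fintype Y] [Nonempty Y]
    (πb : Y → ℝ) (hπb_pos : ∀ y, 0 < πb y) (hπb_sum : ∑ y, πb y = 1)
    (K : ℕ) (hK : 1 ≤ K) (R : Fin K → Y → ℝ) (β : ℝ) (hβ : 0 < β)
    (w : Fin K → ℝ) (hw_nonneg : ∀ k, 0 ≤ w k) (hw_sum : ∑ k, w k = 1)
    (Zk : Fin K → ℝ) (hZk : ∀ k, Zk k = ∑ y, πb y * Real.exp (R k y / β))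
    (πk : Fin K → Y → ℝ) (hπk : ∀ k y, πk k y = πb y * Real.exp (R k y / β) / Zk k)
    (ZW : ℝ) (hZW : ZW = ∑ y, πb y * Real.exp ((∑ k, w k * R k y) / β))
    (πW : Y → ℝ) (hπW : ∀ y, πW y = πb y * Real.exp ((∑ k, w k * R k y) / β) / ZW)
    (Z' : ℝ) (hZ' : Z' = ∑ y, πb y * ∏ k, (πk k y / πb y) ^ (w k)) :
    ∀ y, πW y = πb y * (∏ k, (πk k y / πb y) ^ (w k)) / Z' := by
  have hZk_pos : ∀ k, 0 < Zk k := by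
    intro k
    rw [hZk k]
    exact Finset.sum_pos (fun y _ => mul_pos (hπb_pos y) (Real.exp_pos _))
      Finset.univ_nonempty
  set C : ℝ := ∏ k, (Zk k) ^ (w k) with hC
  have hC_pos : 0 < C :=
    Finset.prod_pos (fun k _ => Real.rpow_pos_of_pos (hZk_pos k) _)
  have key : ∀ y, ∏ k, (πk k y / πb y) ^ (w k)
      = Real.exp ((∑ k, w k * R k y) / β) / C := by
    intro y
    have h1 : ∀ k, πk k y / πb y = Real.exp (R k y / β) / Zk k := by
      intro k
      have h2 : πb y ≠ 0 := (hπb_pos y).ne'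
      have h3 : Zk k ≠ 0 := (hZk_pos k).ne'
      rw [hπk k y]
      field_simp
    calc ∏ k, (πk k y / πb y) ^ (w k)
        = ∏ k, (Real.exp (R k y / β)) ^ (w k) / (Zk k) ^ (w k) := by
          refine Finset.prod_congr rfl fun k _ => ?_
          rw [h1 k, Real.div_rpow (Real.exp_pos _).le (hZk_pos k).le]
      _ = (∏ k, (Real.exp (R k y / β)) ^ (w k)) / C := by
          rw [hC, Finset.prod_div_distrib]
      _ = (∏ k, Real.exp (w k * R k y / β)) / C := by
          congr 1
          refine Finset.prod_congr rfl fun k _ => ?_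
          rw [Real.rpow_def_of_pos (Real.exp_pos _), Real.log_exp]
          ring_nf
      _ = Real.exp ((∑ k, w k * R k y) / β) / C := by
          rw [← Real.exp_sum, Finset.sum_div]
  have hZ'eq : Z' = ZW / C := by
    rw [hZ', hZW, Finset.sum_div]
    refine Finset.sum_congr rfl fun y _ => ?_
    rw [key y]
    ring
  intro y
  have hZW_pos : 0 < ZW := by
    rw [hZW]
    exact Finset.sum_pos (fun y _ => mul_pos (hπb_pos y) (Real.exp_pos _))
      Finset.univ_nonempty
  rw [hπW y, key y, hZ'eq]
  field_simp
end
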